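/- (Theorem, part i: one-to-one correspondence of feasible solutions.) Assume U is nonempty. A nonempty subset W of V is OSDNP-feasible if and only if its indicator function x_W : V → {0,1} (x_W(v) = 1 iff v ∈ W) is (P)-feasible; consequently W ↦ x_W is a bijection between the OSDNP-feasible subsets of V and the (P)-feasible 0/1 vectors on V. -/
import Mathlib


/-- `d_acc^W u`: the minimal access time from urban area `u` to a stop of `W`
(for nonempty finite `W` the infimum below is the minimum). -/
noncomputable def daccW {V U : Type*} (d : U → V → ℝ) (W : Finset V) (u : U) : ℝ :=
  sInf (d u '' ↑W)

/-- `d_acc u = d_acc^V u`: the minimal access time over all bus stops. -/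
noncomputable def daccV {V U : Type*} [Fintype V] (d : U → V → ℝ) (u : U) : ℝ :=
  daccW d Finset.univ u

/-- `d_acc^x u = min_{v ∈ D_u^k} (d u v + (1 − x v) * M)`, the big-M penalized
access time of constraint (2) of program (P), where
`D_u^k = {v | d u v ≤ k u * d_acc u}` (nonempty since `acc u ∈ D_u^k`). -/
noncomputable def daccX {V U : Type*} [Fintype V] (d : U → V → ℝ) (k : U → ℝ)
    (M : ℝ) (x : V → ℝ) (u : U) : ℝ :=
  sInf ((fun v => d u v + (1 - x v) * M) '' {v | d u v ≤ k u * daccV d u})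

/-- The 0/1 indicator vector `x_W` of a subset `W` of `V`. -/
def indW {V : Type*} [DecidableEq V] (W : Finset V) (v : V) : ℝ :=
  if v ∈ W then 1 else 0

/-- A nonempty subset `W ⊆ V` is OSDNP-feasible if (A) the access times do not
increase by more than the factors `k u`, (B) no origin/destination delay increases
by more than the factor `α`, and (C) `|W| ≤ (1 − p_elim) * |V|`. -/
def OSDNPfeasible {V U : Type*} [Fintype V] (d : U → V → ℝ) (k : U → ℝ)
    (PC : V → V → ℝ) (acc : U → V) (α pelim : ℝ) (W : Finset V) : Prop :=
  W.Nonempty ∧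
  (∀ u, daccW d W u ≤ k u * daccV d u) ∧
  (∀ u1 u2, daccW d W u1 + daccW d W u2 + PC (acc u1) (acc u2) ≤
      α * (daccV d u1 + daccV d u2 + PC (acc u1) (acc u2))) ∧
  ((W.card : ℝ) ≤ (1 - pelim) * (Fintype.card V : ℝ))

/-- `x : V → {0,1}` is (P)-feasible if (1) every `u` has a retained stop in `D_u^k`,
(3) the delay constraints hold for `d_acc^x`, and (4) `∑_v x v ≤ (1 − p_elim) * |V|`. -/
def Pfeasible {V U : Type*} [Fintype V] [Fintype U] (d : U → V → ℝ) (k : U → ℝ)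
    (PC : V → V → ℝ) (acc : U → V) (α pelim M : ℝ) (x : V → ℝ) : Prop :=
  (∀ u, ∃ v, d u v ≤ k u * daccV d u ∧ x v = 1) ∧
  (∀ u1 u2, daccX d k M x u1 + daccX d k M x u2 + PC (acc u1) (acc u2) ≤
      α * (daccV d u1 + daccV d u2 + PC (acc u1) (acc u2))) ∧
  (∑ v, x v ≤ (1 - pelim) * (Fintype.card V : ℝ))


set_option linter.unusedSectionVars false

section helpers

variable {V U : Type*} [Fintype V]

lemma daccW_le (d : U → V → ℝ) (W : Finset V) (u : U) {v : V} (hv : v ∈ W) :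
    daccW d W u ≤ d u v := by
  apply csInf_le
  · exact (W.finite_toSet.image _).bddBelow
  · exact ⟨v, hv, rfl⟩

lemma daccW_exists (d : U → V → ℝ) (W : Finset V) (hW : W.Nonempty) (u : U) :
    ∃ v ∈ W, d u v = daccW d W u := by
  have hne : (d u '' ↑W).Nonempty := (hW.to_set).image _
  have := hne.csInf_mem (W.finite_toSet.image _)
  obtain ⟨v, hv, hveq⟩ := this
  exact ⟨v, hv, hveq⟩

lemma daccV_nonneg [Nonempty V] (d : U → V → ℝ) (hd : ∀ u v, 0 ≤ d u v) (u : U) :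
    0 ≤ daccV d u := by
  obtain ⟨v, -, hv⟩ := daccW_exists d Finset.univ Finset.univ_nonempty u
  rw [daccV, ← hv]; exact hd u v

lemma mem_Duk [Nonempty V] (d : U → V → ℝ) (hd : ∀ u v, 0 ≤ d u v) (k : U → ℝ) (hk : ∀ u, 1 ≤ k u)
    (acc : U → V) (hacc : ∀ u, d u (acc u) = daccV d u) (u : U) :
    d u (acc u) ≤ k u * daccV d u := by
  rw [hacc]
  nlinarith [daccV_nonneg d hd u, hk u]

lemma daccX_le (d : U → V → ℝ) (k : U → ℝ) (M : ℝ) (x : V → ℝ) (u : U) {v : V}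
    (hv : d u v ≤ k u * daccV d u) :
    daccX d k M x u ≤ d u v + (1 - x v) * M := by
  apply csInf_le
  · exact ((Set.toFinite _).image _).bddBelow
  · exact ⟨v, hv, rfl⟩

lemma daccX_exists [Nonempty V] (d : U → V → ℝ) (hd : ∀ u v, 0 ≤ d u v) (k : U → ℝ)
    (hk : ∀ u, 1 ≤ k u) (acc : U → V) (hacc : ∀ u, d u (acc u) = daccV d u)
    (M : ℝ) (x : V → ℝ) (u : U) :
    ∃ v, d u v ≤ k u * daccV d u ∧ daccX d k M x u = d u v + (1 - x v) * M := by
  have hne : ((fun v => d u v + (1 - x v) * M) '' {v | d u v ≤ k u * daccV d u}).Nonempty :=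
    ⟨_, ⟨acc u, mem_Duk d hd k hk acc hacc u, rfl⟩⟩
  obtain ⟨v, hv, hveq⟩ := hne.csInf_mem ((Set.toFinite _).image _)
  exact ⟨v, hv, hveq.symm⟩

/-- The key identity: if `W` satisfies the access constraint (A) for `u`, then the
big-M penalized access time of the indicator of `W` equals `daccW d W u`. -/
lemma daccX_indW {V : Type*} [Fintype V] [DecidableEq V] {U : Type*}
    (d : U → V → ℝ) (hd : ∀ u v, 0 ≤ d u v) (k : U → ℝ)
    (M : ℝ) (hM : ∀ u v, d u v ≤ M) (W : Finset V) (hW : W.Nonempty) (u : U)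
    (hA : daccW d W u ≤ k u * daccV d u) :
    daccX d k M (indW W) u = daccW d W u := by
  obtain ⟨v0, hv0W, hv0⟩ := daccW_exists d W hW u
  apply le_antisymm
  · have h1 : d u v0 ≤ k u * daccV d u := by rw [hv0]; exact hA
    have := daccX_le d k M (indW W) u h1
    simpa [indW, hv0W, hv0] using this
  · refine le_csInf ⟨_, ⟨v0, by rw [Set.mem_setOf_eq, hv0]; exact hA, rfl⟩⟩ ?_
    rintro b ⟨v, hv, rfl⟩
    by_cases hvW : v ∈ W
    · simpa [indW, hvW] using daccW_le d W u hvW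
    · simp only [indW, if_neg hvW]
      have : daccW d W u ≤ M := hv0 ▸ (hM u v0)
      nlinarith [hd u v]

lemma sum_indW {V : Type*} [Fintype V] [DecidableEq V] (W : Finset V) :
    ∑ v, indW W v = (W.card : ℝ) := by
  simp [indW, Finset.sum_ite_mem]

end helpers

/-- Theorem, part i: one-to-one correspondence of feasible solutions.  A nonempty
`W ⊆ V` is OSDNP-feasible iff its indicator `x_W` is (P)-feasible; consequently
`W ↦ x_W` is a bijection between the OSDNP-feasible subsets of `V` and the
(P)-feasible 0/1 vectors on `V`. -/
theorem stmt10 {V U : Type*} [Fintype V] [Nonempty V] [Fintype U] [Nonempty U]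
    [DecidableEq V]
    (d : U → V → ℝ) (hd : ∀ u v, 0 ≤ d u v)
    (k : U → ℝ) (hk : ∀ u, 1 ≤ k u)
    (PC : V → V → ℝ) (hPC : ∀ v1 v2, 0 ≤ PC v1 v2)
    (acc : U → V) (hacc : ∀ u, d u (acc u) = daccV d u)
    (α : ℝ) (hα : 1 ≤ α) (pelim : ℝ) (hp0 : 0 ≤ pelim) (hp1 : pelim ≤ 1)
    (OD : U → U → ℕ)
    (M : ℝ) (hM : ∀ u v, d u v ≤ M) :
    (∀ W : Finset V, W.Nonempty →
      (OSDNPfeasible d k PC acc α pelim W ↔ Pfeasible d k PC acc α pelim M (indW W))) ∧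
    Set.BijOn (fun W : Finset V => indW W)
      {W | OSDNPfeasible d k PC acc α pelim W}
      {x | (∀ v, x v = 0 ∨ x v = 1) ∧ Pfeasible d k PC acc α pelim M x} := by
  classical
  have key : ∀ W : Finset V, W.Nonempty →
      (OSDNPfeasible d k PC acc α pelim W ↔ Pfeasible d k PC acc α pelim M (indW W)) := by
    intro W hW
    constructor
    · rintro ⟨-, hA, hB, hC⟩
      refine ⟨?_, ?_, ?_⟩
      · intro u
        obtain ⟨v, hvW, hveq⟩ := daccW_exists d W hW u
        exact ⟨v, by rw [hveq]; exact hA u, by simp [indW, hvW]⟩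
      · intro u1 u2
        rw [daccX_indW d hd k M hM W hW u1 (hA u1), daccX_indW d hd k M hM W hW u2 (hA u2)]
        exact hB u1 u2
      · rw [sum_indW]; exact hC
    · rintro ⟨h1, h3, h4⟩
      have hA : ∀ u, daccW d W u ≤ k u * daccV d u := by
        intro u
        obtain ⟨v, hv, hx⟩ := h1 u
        have hvW : v ∈ W := by
          by_contra h
          simp [indW, h] at hx
        exact le_trans (daccW_le d W u hvW) hv
      refine ⟨hW, hA, ?_, ?_⟩
      · intro u1 u2
        have := h3 u1 u2
        rwa [daccX_indW d hd k M hM W hW u1 (hA u1),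
          daccX_indW d hd k M hM W hW u2 (hA u2)] at this
      · rw [← sum_indW]; exact h4
  refine ⟨key, ?_, ?_, ?_⟩
  · -- MapsTo
    intro W hW
    refine ⟨fun v => ?_, (key W hW.1).mp hW⟩
    by_cases h : v ∈ W <;> simp [indW, h]
  · -- InjOn
    intro W hW W' hW' h
    ext v
    have := congrFun h v
    by_cases h1 : v ∈ W <;> by_cases h2 : v ∈ W' <;> simp_all [indW]
  · -- SurjOn
    rintro x ⟨hx01, hxP⟩
    set W : Finset V := Finset.univ.filter (fun v => x v = 1) with hWdef
    have hind : indW W = x := by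
      funext v
      rcases hx01 v with h | h <;> simp [indW, hWdef, h]
    have hWne : W.Nonempty := by
      obtain ⟨u⟩ := (inferInstance : Nonempty U)
      obtain ⟨v, -, hv⟩ := hxP.1 u
      exact ⟨v, by simp [hWdef, hv]⟩
    refine ⟨W, ?_, hind⟩
    exact (key W hWne).mpr (by rw [hind]; exact hxP)
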